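/- arXiv:2505.10871 — 3 statements merged into one kernel-verified Lean document; each statement's English description precedes it below -/
import Mathlib

section
/- Let N ≥ 0 and ε > 0. If Z is Laplace-distributed with location N and scale 1/ε, then E[max(0, Z)] = N + (1/(2ε))·exp(−εN). Consequently the bias E[max(0,Z)] − N = exp(−εN)/(2ε) is strictly positive. -/
/-!
Since `max 0 z` vanishes on `z ≤ 0`, the expectation is `∫_0^∞ z f(z) dz`. Split at `N`: on
`[0, N]` the density is `(ε/2) e^{-εN} e^{εz}` and on `[N, ∞)` it is `(ε/2) e^{εN} e^{-εz}`, so both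
pieces are integrals of `z e^{cz}`, with primitive `(z/c - 1/c²) e^{cz}`. They contribute
`N/2 - 1/(2ε) + e^{-εN}/(2ε)` and `N/2 + 1/(2ε)`.
-/

open Real MeasureTheory Set Filter Topology

/-- The Laplace density with location `N` and scale `1/ε`. -/
noncomputable def laplaceDensity (ε N z : ℝ) : ℝ := ε / 2 * Real.exp (-ε * |z - N|)

section MulExp

variable {c : ℝ}

lemma hasDerivAt_mul_exp_primitive (hc : c ≠ 0) (z : ℝ) :
    HasDerivAt (fun z => (z / c - 1 / c ^ 2) * exp (c * z)) (z * exp (c * z)) z := by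
  have h := (((hasDerivAt_id' z).div_const c).sub_const (1 / c ^ 2)).mul
    ((hasDerivAt_id' z).const_mul c).exp
  refine h.congr_deriv ?_
  field_simp
  ring

lemma tendsto_mul_exp_primitive_atTop (hc : c < 0) :
    Tendsto (fun z => (z / c - 1 / c ^ 2) * exp (c * z)) atTop (𝓝 0) := by
  have hlin : Tendsto (fun z : ℝ => z * exp (c * z)) atTop (𝓝 0) := by
    simpa using tendsto_rpow_mul_exp_neg_mul_atTop_nhds_zero 1 (-c) (neg_pos.2 hc)
  have hexp : Tendsto (fun z : ℝ => exp (c * z)) atTop (𝓝 0) :=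
    tendsto_exp_atBot.comp (tendsto_id.const_mul_atTop_of_neg hc)
  convert (hlin.div_const c).sub (hexp.const_mul (1 / c ^ 2)) using 2
  · ring
  · simp

lemma integral_mul_exp (hc : c ≠ 0) (a b : ℝ) :
    ∫ z in a..b, z * exp (c * z) =
      (b / c - 1 / c ^ 2) * exp (c * b) - (a / c - 1 / c ^ 2) * exp (c * a) :=
  intervalIntegral.integral_eq_sub_of_hasDerivAt
    (fun z _ => hasDerivAt_mul_exp_primitive hc z)
    ((by fun_prop : Continuous fun z => z * exp (c * z)).intervalIntegrable a b)

variable {a : ℝ}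

lemma integrableOn_Ioi_mul_exp (hc : c < 0) (ha : 0 ≤ a) :
    IntegrableOn (fun z => z * exp (c * z)) (Ioi a) :=
  integrableOn_Ioi_deriv_of_nonneg' (fun z _ => hasDerivAt_mul_exp_primitive hc.ne z)
    (fun _ hz => mul_nonneg (ha.trans hz.out.le) (exp_pos _).le)
    (tendsto_mul_exp_primitive_atTop hc)

lemma integral_Ioi_mul_exp (hc : c < 0) (ha : 0 ≤ a) :
    ∫ z in Ioi a, z * exp (c * z) = -((a / c - 1 / c ^ 2) * exp (c * a)) := by
  rw [integral_Ioi_of_hasDerivAt_of_nonneg' (fun z _ => hasDerivAt_mul_exp_primitive hc.ne z)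
    (fun _ hz => mul_nonneg (ha.trans hz.out.le) (exp_pos _).le)
    (tendsto_mul_exp_primitive_atTop hc), zero_sub]

end MulExp

lemma integral_max_zero_mul (g : ℝ → ℝ) :
    ∫ z, max 0 z * g z = ∫ z in Ioi 0, z * g z := by
  rw [← integral_indicator measurableSet_Ioi]
  congr 1 with z
  rcases le_or_gt z 0 with hz | hz
  · rw [max_eq_left hz, zero_mul, indicator_of_notMem (show z ∉ Ioi 0 from not_lt.2 hz)]
  · rw [max_eq_right hz.le, indicator_of_mem (show z ∈ Ioi 0 from hz)]

section Laplace

variable {ε N : ℝ}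

lemma continuous_mul_laplaceDensity : Continuous fun z => z * laplaceDensity ε N z := by
  unfold laplaceDensity
  fun_prop

lemma mul_laplaceDensity_of_le {z : ℝ} (hz : z ≤ N) :
    z * laplaceDensity ε N z = ε / 2 * exp (-ε * N) * (z * exp (ε * z)) := by
  rw [laplaceDensity, abs_of_nonpos (sub_nonpos.2 hz),
    show -ε * -(z - N) = -ε * N + ε * z by ring, exp_add]
  ring

lemma mul_laplaceDensity_of_ge {z : ℝ} (hz : N ≤ z) :
    z * laplaceDensity ε N z = ε / 2 * exp (ε * N) * (z * exp (-ε * z)) := by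
  rw [laplaceDensity, abs_of_nonneg (sub_nonneg.2 hz),
    show -ε * (z - N) = ε * N + -ε * z by ring, exp_add]
  ring

lemma setIntegral_Ioc_mul_laplaceDensity (hε : ε ≠ 0) (hN : 0 ≤ N) :
    ∫ z in Ioc 0 N, z * laplaceDensity ε N z =
      N / 2 - 1 / (2 * ε) + exp (-ε * N) / (2 * ε) := by
  rw [setIntegral_congr_fun measurableSet_Ioc fun z hz => mul_laplaceDensity_of_le hz.2,
    integral_const_mul, ← intervalIntegral.integral_of_le hN, integral_mul_exp hε]
  have hinv : exp (ε * N) = (exp (-ε * N))⁻¹ := by rw [← exp_neg, neg_mul, neg_neg]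
  rw [hinv, mul_zero, exp_zero]
  field_simp
  ring

lemma integrableOn_Ioi_mul_laplaceDensity (hε : 0 < ε) (hN : 0 ≤ N) :
    IntegrableOn (fun z => z * laplaceDensity ε N z) (Ioi N) :=
  IntegrableOn.congr_fun ((integrableOn_Ioi_mul_exp (neg_neg_of_pos hε) hN).const_mul _)
    (fun _ hz => (mul_laplaceDensity_of_ge hz.out.le).symm) measurableSet_Ioi

lemma setIntegral_Ioi_mul_laplaceDensity (hε : 0 < ε) (hN : 0 ≤ N) :
    ∫ z in Ioi N, z * laplaceDensity ε N z = N / 2 + 1 / (2 * ε) := by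
  rw [setIntegral_congr_fun measurableSet_Ioi fun z hz => mul_laplaceDensity_of_ge hz.out.le,
    integral_const_mul, integral_Ioi_mul_exp (neg_neg_of_pos hε) hN]
  have hinv : exp (-ε * N) = (exp (ε * N))⁻¹ := by rw [← exp_neg, neg_mul]
  rw [hinv]
  field_simp
  ring

lemma integral_max_zero_mul_laplaceDensity (hε : 0 < ε) (hN : 0 ≤ N) :
    ∫ z, max 0 z * laplaceDensity ε N z = N + 1 / (2 * ε) * exp (-ε * N) := by
  rw [integral_max_zero_mul, ← Ioc_union_Ioi_eq_Ioi hN,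
    setIntegral_union (Ioc_disjoint_Ioi le_rfl) measurableSet_Ioi
      continuous_mul_laplaceDensity.integrableOn_Ioc (integrableOn_Ioi_mul_laplaceDensity hε hN),
    setIntegral_Ioc_mul_laplaceDensity hε.ne' hN, setIntegral_Ioi_mul_laplaceDensity hε hN]
  ring

end Laplace

theorem bias_truncated_laplace (N ε : ℝ) (hN : 0 ≤ N) (hε : 0 < ε) :
    (∫ z : ℝ, max 0 z * laplaceDensity ε N z) = N + 1 / (2 * ε) * Real.exp (-ε * N) ∧
    (∫ z : ℝ, max 0 z * laplaceDensity ε N z) - N = Real.exp (-ε * N) / (2 * ε) ∧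
    0 < Real.exp (-ε * N) / (2 * ε) := by
  have hmean := integral_max_zero_mul_laplaceDensity hε hN
  refine ⟨hmean, ?_, by positivity⟩
  rw [hmean]
  ring
end

section
/- Let N ≥ 0 and ε > 0, and let Z be Laplace-distributed with location N and scale 1/ε. Then the second moment of Ñ = max(0, Z) satisfies E[Ñ²] = (1/ε²)·(ε²N² + 2 − exp(−εN)). -/
open Real MeasureTheory

/-!
Since `max 0 z ^ 2` vanishes for `z ≤ 0`, the moment is `∫_{(0,∞)} z² f`. Split at `N`: on each
side the density is a constant multiple of `exp (±ε z)`, and `z² exp (c z)` has the explicit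
primitive `exp (c z) (z²/c - 2z/c² + 2/c³)`, which tends to `0` at `+∞` when `c = -ε < 0`.
-/

open Set Filter Topology

noncomputable def sqMulExpPrimitive (c z : ℝ) : ℝ :=
  exp (c * z) * (z ^ 2 / c - 2 * z / c ^ 2 + 2 / c ^ 3)

theorem hasDerivAt_sqMulExpPrimitive {c : ℝ} (hc : c ≠ 0) (z : ℝ) :
    HasDerivAt (sqMulExpPrimitive c) (z ^ 2 * exp (c * z)) z := by
  have hexp : HasDerivAt (fun z => exp (c * z)) (exp (c * z) * c) z :=
    ((hasDerivAt_id z).const_mul c).exp.congr_deriv (by simp)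
  have hpoly : HasDerivAt (fun z : ℝ => z ^ 2 / c - 2 * z / c ^ 2 + 2 / c ^ 3)
      (2 * z / c - 2 / c ^ 2) z :=
    ((((hasDerivAt_pow 2 z).div_const c).sub
      (((hasDerivAt_id z).const_mul 2).div_const (c ^ 2))).add_const _).congr_deriv (by simp)
  exact (hexp.mul hpoly).congr_deriv (by field_simp; ring)

theorem tendsto_pow_mul_exp_mul_atTop_nhds_zero {c : ℝ} (hc : c < 0) (k : ℕ) :
    Tendsto (fun z : ℝ => z ^ k * exp (c * z)) atTop (𝓝 0) := by
  simpa using tendsto_rpow_mul_exp_neg_mul_atTop_nhds_zero k (-c) (neg_pos.2 hc)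

theorem tendsto_sqMulExpPrimitive_atTop {c : ℝ} (hc : c < 0) :
    Tendsto (sqMulExpPrimitive c) atTop (𝓝 0) := by
  have h := (((tendsto_pow_mul_exp_mul_atTop_nhds_zero hc 2).div_const c).sub
    (((tendsto_pow_mul_exp_mul_atTop_nhds_zero hc 1).const_mul 2).div_const (c ^ 2))).add
    (((tendsto_pow_mul_exp_mul_atTop_nhds_zero hc 0).const_mul 2).div_const (c ^ 3))
  simp only [zero_div, mul_zero, sub_zero, add_zero] at h
  refine h.congr fun z => ?_
  simp only [sqMulExpPrimitive]
  ring

theorem integral_sq_mul_exp {c : ℝ} (hc : c ≠ 0) (a b : ℝ) :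
    ∫ z in a..b, z ^ 2 * exp (c * z) = sqMulExpPrimitive c b - sqMulExpPrimitive c a :=
  intervalIntegral.integral_eq_sub_of_hasDerivAt (fun z _ => hasDerivAt_sqMulExpPrimitive hc z)
    ((by fun_prop : Continuous fun z : ℝ => z ^ 2 * exp (c * z)).intervalIntegrable a b)

theorem integrableOn_Ioi_sq_mul_exp {c : ℝ} (hc : c < 0) (a : ℝ) :
    IntegrableOn (fun z => z ^ 2 * exp (c * z)) (Ioi a) :=
  integrableOn_Ioi_deriv_of_nonneg' (fun z _ => hasDerivAt_sqMulExpPrimitive hc.ne z)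
    (fun z _ => by positivity) (tendsto_sqMulExpPrimitive_atTop hc)

theorem integral_Ioi_sq_mul_exp {c : ℝ} (hc : c < 0) (a : ℝ) :
    ∫ z in Ioi a, z ^ 2 * exp (c * z) = -sqMulExpPrimitive c a := by
  rw [integral_Ioi_of_hasDerivAt_of_nonneg' (fun z _ => hasDerivAt_sqMulExpPrimitive hc.ne z)
    (fun z _ => by positivity) (tendsto_sqMulExpPrimitive_atTop hc), zero_sub]

theorem laplaceDensity_of_le {ε N z : ℝ} (h : N ≤ z) :
    laplaceDensity ε N z = ε / 2 * exp (ε * N) * exp (-ε * z) := by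
  rw [laplaceDensity, abs_of_nonneg (sub_nonneg.2 h), mul_assoc, ← exp_add]
  ring_nf

theorem laplaceDensity_of_ge {ε N z : ℝ} (h : z ≤ N) :
    laplaceDensity ε N z = ε / 2 * exp (-ε * N) * exp (ε * z) := by
  rw [laplaceDensity, abs_of_nonpos (sub_nonpos.2 h), mul_assoc, ← exp_add]
  ring_nf

theorem continuous_laplaceDensity (ε N : ℝ) : Continuous (laplaceDensity ε N) := by
  unfold laplaceDensity; fun_prop

theorem integral_Ioc_zero_sq_mul_laplaceDensity {ε N : ℝ} (hε : ε ≠ 0) (hN : 0 ≤ N) :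
    ∫ z in Ioc 0 N, z ^ 2 * laplaceDensity ε N z
      = N ^ 2 / 2 - N / ε + 1 / ε ^ 2 - exp (-ε * N) / ε ^ 2 := by
  rw [setIntegral_congr_fun measurableSet_Ioc fun z hz => by
      rw [laplaceDensity_of_ge hz.2, mul_left_comm], integral_const_mul,
    ← intervalIntegral.integral_of_le hN, integral_sq_mul_exp hε]
  simp only [sqMulExpPrimitive, mul_zero, exp_zero, neg_mul, exp_neg]
  field_simp
  ring

theorem integrableOn_Ioi_sq_mul_laplaceDensity {ε : ℝ} (hε : 0 < ε) (N : ℝ) :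
    IntegrableOn (fun z => z ^ 2 * laplaceDensity ε N z) (Ioi N) := by
  refine IntegrableOn.congr_fun ((integrableOn_Ioi_sq_mul_exp (neg_lt_zero.2 hε) N).const_mul
    (ε / 2 * exp (ε * N))) (fun z hz => ?_) measurableSet_Ioi
  rw [laplaceDensity_of_le hz.le, mul_left_comm]

theorem integral_Ioi_sq_mul_laplaceDensity {ε : ℝ} (hε : 0 < ε) (N : ℝ) :
    ∫ z in Ioi N, z ^ 2 * laplaceDensity ε N z = N ^ 2 / 2 + N / ε + 1 / ε ^ 2 := by
  rw [setIntegral_congr_fun measurableSet_Ioi fun z hz => by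
      rw [laplaceDensity_of_le hz.le, mul_left_comm], integral_const_mul,
    integral_Ioi_sq_mul_exp (neg_lt_zero.2 hε)]
  simp only [sqMulExpPrimitive, neg_mul, exp_neg]
  field_simp
  ring

theorem integral_max_zero_sq_mul (g : ℝ → ℝ) :
    ∫ z, max 0 z ^ 2 * g z = ∫ z in Ioi 0, z ^ 2 * g z := by
  rw [← integral_indicator measurableSet_Ioi]
  congr 1 with z
  by_cases hz : 0 < z
  · simp [hz, hz.le]
  · simp [hz, not_lt.1 hz]

theorem second_moment_truncated_laplace (N ε : ℝ) (hN : 0 ≤ N) (hε : 0 < ε) :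
    (∫ z : ℝ, (max 0 z) ^ 2 * laplaceDensity ε N z) =
      1 / ε ^ 2 * (ε ^ 2 * N ^ 2 + 2 - Real.exp (-ε * N)) := by
  have hIoc : IntegrableOn (fun z => z ^ 2 * laplaceDensity ε N z) (Ioc 0 N) :=
    ((continuous_pow 2).mul (continuous_laplaceDensity ε N)).integrableOn_Icc.mono_set
      Ioc_subset_Icc_self
  rw [integral_max_zero_sq_mul, ← Ioc_union_Ioi_eq_Ioi hN,
    setIntegral_union (Ioc_disjoint_Ioi le_rfl) measurableSet_Ioi hIoc
      (integrableOn_Ioi_sq_mul_laplaceDensity hε N),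
    integral_Ioc_zero_sq_mul_laplaceDensity hε.ne' hN, integral_Ioi_sq_mul_laplaceDensity hε N]
  field_simp
  ring
end

section
/- For any fixed N > 0, the function f(ε) = (1/ε²)·(2 − exp(−εN)) − (N/ε)·exp(−εN) is strictly convex on (0, ∞), i.e., its second derivative is strictly positive for all ε > 0. -/
open Real

/-! With `x = εN`, a direct computation gives
`f''(ε) = (12 - (6 + 6x + 3x² + x³) e^{-x}) / ε⁴`.
The function `x ↦ (6 + 6x + 3x² + x³) e^{-x}` has derivative `-x³ e^{-x}`, so it attains its
maximum `6` at `x = 0`; hence `f''(ε) ≥ 6 / ε⁴ > 0`. -/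

theorem hasDerivAt_cubic_mul_exp_neg (x : ℝ) :
    HasDerivAt (fun x => (6 + 6 * x + 3 * x ^ 2 + x ^ 3) * exp (-x)) (-x ^ 3 * exp (-x)) x := by
  have hp : HasDerivAt (fun x : ℝ => 6 + 6 * x + 3 * x ^ 2 + x ^ 3) (6 + 6 * x + 3 * x ^ 2) x :=
    (((((hasDerivAt_id x).const_mul 6).const_add 6).add
      ((hasDerivAt_pow 2 x).const_mul 3)).add (hasDerivAt_pow 3 x)).congr_deriv (by norm_num; ring)
  exact (hp.mul (hasDerivAt_neg x).exp).congr_deriv (by ring)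

theorem cubic_mul_exp_neg_le_six (x : ℝ) : (6 + 6 * x + 3 * x ^ 2 + x ^ 3) * exp (-x) ≤ 6 := by
  have hcont : Continuous fun x : ℝ => (6 + 6 * x + 3 * x ^ 2 + x ^ 3) * exp (-x) := by fun_prop
  have hderiv (s : Set ℝ) (y : ℝ) := (hasDerivAt_cubic_mul_exp_neg y).hasDerivWithinAt (s := s)
  rcases le_total 0 x with hx | hx
  · have hanti := antitoneOn_of_hasDerivWithinAt_nonpos (convex_Ici 0) hcont.continuousOn
      (fun y _ => hderiv _ y) (fun y hy => ?_) Set.self_mem_Ici hx hx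
    · simpa using hanti
    · rw [interior_Ici] at hy
      have : 0 < y ^ 3 := pow_pos hy 3
      nlinarith [exp_pos (-y)]
  · have hmono := monotoneOn_of_hasDerivWithinAt_nonneg (convex_Iic 0) hcont.continuousOn
      (fun y _ => hderiv _ y) (fun y hy => ?_) hx Set.self_mem_Iic hx
    · simpa using hmono
    · rw [interior_Iic] at hy
      have : y ^ 3 < 0 := Odd.pow_neg (by decide) hy
      nlinarith [exp_pos (-y)]

noncomputable def nonnegLaplaceMSE (N ε : ℝ) : ℝ :=
  1 / ε ^ 2 * (2 - exp (-ε * N)) - N / ε * exp (-ε * N)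

theorem hasDerivAt_exp_neg_mul (N ε : ℝ) :
    HasDerivAt (fun ε => exp (-ε * N)) (-N * exp (-ε * N)) ε :=
  (((hasDerivAt_neg ε).mul_const N).exp).congr_deriv (by ring)

theorem hasDerivAt_nonnegLaplaceMSE (N : ℝ) {ε : ℝ} (hε : ε ≠ 0) :
    HasDerivAt (nonnegLaplaceMSE N)
      (-4 / ε ^ 3 + (2 / ε ^ 3 + 2 * N / ε ^ 2 + N ^ 2 / ε) * exp (-ε * N)) ε := by
  have hinvSq := (hasDerivAt_const ε (1 : ℝ)).div (hasDerivAt_pow 2 ε) (pow_ne_zero 2 hε)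
  have hinv := (hasDerivAt_const ε N).div (hasDerivAt_id ε) hε
  refine ((hinvSq.mul ((hasDerivAt_const ε 2).sub (hasDerivAt_exp_neg_mul N ε))).sub
    (hinv.mul (hasDerivAt_exp_neg_mul N ε))).congr_deriv ?_
  simp only [Pi.div_apply, Pi.sub_apply, id_eq]
  field_simp
  ring

theorem hasDerivAt_deriv_nonnegLaplaceMSE (N : ℝ) {ε : ℝ} (hε : ε ≠ 0) :
    HasDerivAt (deriv (nonnegLaplaceMSE N))
      ((12 - (6 + 6 * (ε * N) + 3 * (ε * N) ^ 2 + (ε * N) ^ 3) * exp (-(ε * N))) / ε ^ 4) ε := by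
  have hderiv : deriv (nonnegLaplaceMSE N) =ᶠ[nhds ε]
      fun ε => -4 / ε ^ 3 + (2 / ε ^ 3 + 2 * N / ε ^ 2 + N ^ 2 / ε) * exp (-ε * N) := by
    filter_upwards [eventually_ne_nhds hε] with x hx
    exact (hasDerivAt_nonnegLaplaceMSE N hx).deriv
  have hpow (n : ℕ) (c : ℝ) := (hasDerivAt_const ε c).div (hasDerivAt_pow n ε) (pow_ne_zero n hε)
  refine (((hpow 3 (-4)).add ((((hpow 3 2).add (hpow 2 (2 * N))).add
    ((hasDerivAt_const ε (N ^ 2)).div (hasDerivAt_id ε) hε)).mul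
      (hasDerivAt_exp_neg_mul N ε))).congr_deriv ?_).congr_of_eventuallyEq hderiv
  simp only [Pi.div_apply, Pi.add_apply, id_eq, neg_mul]
  field_simp
  ring

theorem deriv2_nonnegLaplaceMSE_pos (N : ℝ) {ε : ℝ} (hε : 0 < ε) :
    0 < deriv^[2] (nonnegLaplaceMSE N) ε := by
  rw [Function.iterate_succ_apply', Function.iterate_one,
    (hasDerivAt_deriv_nonnegLaplaceMSE N hε.ne').deriv]
  exact div_pos (by linarith [cubic_mul_exp_neg_le_six (ε * N)]) (by positivity)

theorem mse_strictConvex_in_eps_general (N : ℝ) :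
    StrictConvexOn ℝ (Set.Ioi (0 : ℝ))
      (fun ε : ℝ => 1 / ε ^ 2 * (2 - Real.exp (-ε * N)) - N / ε * Real.exp (-ε * N)) ∧
    ∀ ε : ℝ, 0 < ε →
      0 < iteratedDeriv 2
        (fun ε : ℝ => 1 / ε ^ 2 * (2 - Real.exp (-ε * N)) - N / ε * Real.exp (-ε * N)) ε := by
  change StrictConvexOn ℝ _ (nonnegLaplaceMSE N) ∧
    ∀ ε : ℝ, 0 < ε → 0 < iteratedDeriv 2 (nonnegLaplaceMSE N) ε
  refine ⟨strictConvexOn_of_deriv2_pos (convex_Ioi 0) ?_ ?_, fun ε hε => ?_⟩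
  · exact fun x hx => (hasDerivAt_nonnegLaplaceMSE N (ne_of_gt hx)).continuousAt.continuousWithinAt
  · rw [interior_Ioi]
    exact fun x hx => deriv2_nonnegLaplaceMSE_pos N hx
  · rw [iteratedDeriv_eq_iterate]
    exact deriv2_nonnegLaplaceMSE_pos N hε

theorem mse_strictConvex_in_eps (N : ℝ) (hN : 0 < N) :
    StrictConvexOn ℝ (Set.Ioi (0 : ℝ))
      (fun ε : ℝ => 1 / ε ^ 2 * (2 - Real.exp (-ε * N)) - N / ε * Real.exp (-ε * N)) ∧
    ∀ ε : ℝ, 0 < ε →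
      0 < iteratedDeriv 2
        (fun ε : ℝ => 1 / ε ^ 2 * (2 - Real.exp (-ε * N)) - N / ε * Real.exp (-ε * N)) ε :=
  mse_strictConvex_in_eps_general N
end
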